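/- Let G be a finite weighted directed graph, all whose cycles pass through edge e = (u,v), and let C_min be a cycle minimizing φ. In the iterative deletion process, if C is the first recorded cycle (the one with largest M among recorded cycles), then M(C_min) ≤ M(C): no cycle with minimum flow value has maximum edge weight exceeding that of the first recorded cycle. -/

import Mathlib

/-- A directed multigraph: edges `E` with source and target vertices in `V`. -/
structure MultiDigraph (V : Type) (E : Type) where
  src : E → V
  tgt : E → V

namespace MultiDigraph

variable {V E : Type}

/-- `G.IsWalk v u l` : the list of edges `l` forms a directed walk from `v` to `u`. -/
def IsWalk (G : MultiDigraph V E) : V → V → List E → Prop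
  | v, u, [] => v = u
  | v, u, e :: l => G.src e = v ∧ G.IsWalk (G.tgt e) u l

/-- A (directed) cycle: a nonempty closed walk. -/
def IsCycle (G : MultiDigraph V E) (l : List E) : Prop :=
  l ≠ [] ∧ ∃ x, G.IsWalk x x l

/-- minimum edge weight (critical edge value γ) along a nonempty list of edges. -/
noncomputable def minW (w : E → ℝ) (l : List E) : ℝ := ((l.map w).min?).getD 0

/-- maximum edge weight M along a nonempty list of edges. -/
noncomputable def maxW (w : E → ℝ) (l : List E) : ℝ := ((l.map w).max?).getD 0

/-- flow value φ = M − γ. -/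
noncomputable def flowVal (w : E → ℝ) (l : List E) : ℝ := maxW w l - minW w l

end MultiDigraph

namespace MultiDigraph

variable {V E : Type}

/-- The edges of `l` all lie in the edge set `F`. -/
def EdgesIn (l : List E) (F : Finset E) : Prop := ∀ f ∈ l, f ∈ F

/-- `P` is a maxflow path from `v` to `u` using only edges of `F`. -/
def IsMaxflowPathIn (G : MultiDigraph V E) (w : E → ℝ) (v u : V) (F : Finset E)
    (P : List E) : Prop :=
  G.IsWalk v u P ∧ P ≠ [] ∧ EdgesIn P F ∧
    ∀ Q, G.IsWalk v u Q → Q ≠ [] → EdgesIn Q F → minW w Q ≤ minW w P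

/-- `ProcessRun G w e u v k Es Ps`: the iterative process of Algorithm 2.
Starting from the whole graph (`Es 0 = univ`), at each step `i < k` the list
`Ps i` is a maxflow path from `v` to `u` in the current edge set `Es i`, the
cycle `Ps i ++ [e]` is recorded, and every edge other than `e` of weight
`≥ M(Ps i)` is deleted to form `Es (i+1)`. -/
def ProcessRun [Fintype E] (G : MultiDigraph V E) (w : E → ℝ) (e : E) (u v : V)
    (k : ℕ) (Es : ℕ → Finset E) (Ps : ℕ → List E) : Prop :=
  Es 0 = Finset.univ ∧
  ∀ i < k,
    G.IsMaxflowPathIn w v u (Es i) (Ps i) ∧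
    ((Es (i+1) : Set E) = {f ∈ (Es i : Set E) | ¬ (maxW w (Ps i) ≤ w f ∧ f ≠ e)})

/-- There is a cycle all of whose edges lie in `F`. -/
def HasCycleIn (G : MultiDigraph V E) (F : Finset E) : Prop :=
  ∃ C, G.IsCycle C ∧ EdgesIn C F

end MultiDigraph

/-!
Rotate the minimizing cycle `C_min` so that it starts with `e`: the rest of it is a nonempty `v`–`u` walk
`Q`, hence `γ(C_min) ≤ γ(Q) ≤ γ(P₀)` by maximality of the first flow path `P₀`, and also
`γ(C_min) ≤ w e`. So `γ(C_min) ≤ γ(P₀ ++ [e])`, and `φ(C_min) ≤ φ(P₀ ++ [e])` then forces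
`M(C_min) ≤ M(P₀ ++ [e])`. When `C_min = [e]` the claim is just `w e ≤ M(P₀ ++ [e])`.
-/

namespace MultiDigraph

variable {V E : Type}

theorem isWalk_append (G : MultiDigraph V E) {v u : V} {l₁ l₂ : List E} :
    G.IsWalk v u (l₁ ++ l₂) ↔ ∃ x, G.IsWalk v x l₁ ∧ G.IsWalk x u l₂ := by
  induction l₁ generalizing v with
  | nil => simp [IsWalk]
  | cons f l₁ ih => simp [IsWalk, ih, and_assoc]

theorem isCycle_append_singleton (G : MultiDigraph V E) {v u : V} {P : List E} {e : E}
    (hP : G.IsWalk v u P) (hsrc : G.src e = u) (htgt : G.tgt e = v) :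
    G.IsCycle (P ++ [e]) :=
  ⟨by simp, v, G.isWalk_append.2 ⟨u, hP, hsrc, htgt⟩⟩

theorem IsWalk.exists_perm_cons_of_mem {G : MultiDigraph V E} {x : V} {C : List E} {e : E}
    (hC : G.IsWalk x x C) (he : e ∈ C) :
    ∃ Q, G.IsWalk (G.tgt e) (G.src e) Q ∧ (e :: Q).Perm C := by
  obtain ⟨l₁, l₂, rfl⟩ := List.append_of_mem he
  obtain ⟨y, h₁, hy, h₂⟩ := G.isWalk_append.1 hC
  refine ⟨l₂ ++ l₁, G.isWalk_append.2 ⟨x, h₂, hy ▸ h₁⟩, ?_⟩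
  rw [← List.cons_append]
  exact List.perm_append_comm

theorem le_minW_iff (w : E → ℝ) {l : List E} (hl : l ≠ []) {a : ℝ} :
    a ≤ minW w l ↔ ∀ f ∈ l, a ≤ w f := by
  obtain ⟨m, hm⟩ := Option.isSome_iff_exists.1
    ((List.isSome_min?_iff (xs := l.map w)).2 (by simpa using hl))
  rw [minW, hm, Option.getD_some, List.le_min?_iff hm]
  simp

theorem minW_le (w : E → ℝ) {l : List E} {f : E} (hf : f ∈ l) : minW w l ≤ w f :=
  (le_minW_iff w (List.ne_nil_of_mem hf)).1 le_rfl f hf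

theorem le_maxW (w : E → ℝ) {l : List E} {f : E} (hf : f ∈ l) : w f ≤ maxW w l := by
  obtain ⟨m, hm⟩ := Option.isSome_iff_exists.1
    ((List.isSome_max?_iff (xs := l.map w)).2 (by simpa using List.ne_nil_of_mem hf))
  rw [maxW, hm, Option.getD_some]
  exact (List.max?_le_iff hm).1 le_rfl (w f) (List.mem_map_of_mem hf)

end MultiDigraph

open MultiDigraph in
theorem stmt_13_general {V E : Type} [Fintype E]
    (G : MultiDigraph V E) (w : E → ℝ) (e : E) (u v : V)
    (hsrc : G.src e = u) (htgt : G.tgt e = v)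
    (hall : ∀ l, G.IsCycle l → e ∈ l)
    (k : ℕ) (Es : ℕ → Finset E) (Ps : ℕ → List E)
    (hrun : G.ProcessRun w e u v k Es Ps)
    (hk : 0 < k)
    (Cmin : List E) (hCmin : G.IsCycle Cmin)
    (hmin : ∀ C', G.IsCycle C' → flowVal w Cmin ≤ flowVal w C') :
    maxW w Cmin ≤ maxW w (Ps 0 ++ [e]) := by
  obtain ⟨hEs0, hstep⟩ := hrun
  obtain ⟨hP₀, -, -, hP₀max⟩ := (hstep 0 hk).1
  have heCmin := hall Cmin hCmin
  obtain ⟨x, hx⟩ := hCmin.2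
  obtain ⟨Q, hQ, hperm⟩ := hx.exists_perm_cons_of_mem heCmin
  rw [hsrc, htgt] at hQ
  obtain rfl | hQne := eq_or_ne Q []
  · obtain rfl := List.perm_singleton.1 hperm.symm
    rw [show maxW w [e] = w e by simp [maxW]]
    exact le_maxW w (by simp)
  have hγQ : minW w Cmin ≤ minW w Q := (le_minW_iff w hQne).2 fun f hf =>
    minW_le w (hperm.subset (List.mem_cons_of_mem e hf))
  have hγ : minW w Cmin ≤ minW w (Ps 0 ++ [e]) := (le_minW_iff w (by simp)).2 fun f hf => by
    rcases List.mem_append.1 hf with hf | hf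
    · exact hγQ.trans <| (hP₀max Q hQ hQne fun f _ => hEs0 ▸ Finset.mem_univ f).trans
        (minW_le w hf)
    · exact List.mem_singleton.1 hf ▸ minW_le w heCmin
  have hφ := hmin _ (G.isCycle_append_singleton hP₀ hsrc htgt)
  rw [flowVal, flowVal] at hφ
  linarith

open MultiDigraph in
/-- if C_min is a cycle of minimum flow value, then its maximum
edge weight does not exceed that of the first recorded cycle `Ps 0 ++ [e]`. -/
theorem stmt_13 {V E : Type} [Fintype E] [DecidableEq E]
    (G : MultiDigraph V E) (w : E → ℝ) (e : E) (u v : V)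
    (hsrc : G.src e = u) (htgt : G.tgt e = v)
    (hall : ∀ l, G.IsCycle l → e ∈ l)
    (k : ℕ) (Es : ℕ → Finset E) (Ps : ℕ → List E)
    (hrun : G.ProcessRun w e u v k Es Ps)
    (hterm : ¬ G.HasCycleIn (Es k))
    (hk : 0 < k)
    (Cmin : List E) (hCmin : G.IsCycle Cmin)
    (hmin : ∀ C', G.IsCycle C' → flowVal w Cmin ≤ flowVal w C') :
    maxW w Cmin ≤ maxW w (Ps 0 ++ [e]) :=
  stmt_13_general G w e u v hsrc htgt hall k Es Ps hrun hk Cmin hCmin hmin
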